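/- arXiv:1903.07418 — 4 statements merged into one kernel-verified Lean document; each statement's English description precedes it below -/
import Mathlib

section
/- Let G=(V,E) be a simple graph on n vertices with girth at least 5. Then the sum of the degrees of all vertices of degree at least 2√n is at most 2n. -/
/-!
Let `S` be the set of vertices of degree at least `2√n`, `D = ∑_{u ∈ S} d(u)`, and for a vertex `x`
let `s(x)` be the number of its neighbours in `S`, so that `∑ₓ s(x) = D`. Girth at least 5 means
that every pair of distinct vertices of `S` has at most one common neighbour, hence
`∑ₓ s(x)(s(x) - 1) ≤ |S|²`. Cauchy–Schwarz gives `D² ≤ n ∑ₓ s(x)² ≤ n (|S|² + D)`, and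
`|S| ≤ D / (2√n)` turns this into `3D ≤ 4n`.
-/

open SimpleGraph Finset

namespace SimpleGraph

variable {V : Type*} (G : SimpleGraph V)

lemma eq_of_adj_of_adj_of_five_le_girth (hg : 5 ≤ G.girth) {x y u u' : V} (hu : u ≠ u')
    (hxu : G.Adj x u) (hxu' : G.Adj x u') (hyu : G.Adj y u) (hyu' : G.Adj y u') : x = y := by
  by_contra hxy
  let w : G.Walk x x := .cons hxu (.cons hyu.symm (.cons hyu' (.cons hxu'.symm .nil)))
  have hw : w.IsCycle := by
    simp [w, Walk.isCycle_def, Walk.isTrail_def, hxu.ne, hxu'.ne, hyu'.ne, hu, hxy, Ne.symm hxy,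
      hxu.ne', hyu.ne', hxu'.ne']
  have := G.girth_le_length hw
  simp [w] at this
  omega

variable [Fintype V] [DecidableRel G.Adj]

lemma sum_card_offDiag_neighbors_le [DecidableEq V]
    (hC4 : ∀ ⦃x y u u' : V⦄, u ≠ u' → G.Adj x u → G.Adj x u' → G.Adj y u → G.Adj y u' → x = y)
    (S : Finset V) : ∑ x, #{u ∈ S | G.Adj x u}.offDiag ≤ #S.offDiag := by
  have hpairs : ∀ x, {u ∈ S | G.Adj x u}.offDiag =
      S.offDiag.bipartiteAbove (fun x p => G.Adj x p.1 ∧ G.Adj x p.2) x := by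
    intro x
    ext p
    simp only [mem_offDiag, mem_filter, mem_bipartiteAbove]
    tauto
  simp_rw [hpairs, sum_card_bipartiteAbove_eq_sum_card_bipartiteBelow]
  calc _ ≤ ∑ p ∈ S.offDiag, 1 := sum_le_sum fun p hp => card_le_one.mpr fun x hx y hy => by
          simp only [mem_bipartiteBelow] at hx hy
          exact hC4 (mem_offDiag.mp hp).2.2 hx.2.1 hx.2.2 hy.2.1 hy.2.2
    _ = #S.offDiag := (card_eq_sum_ones _).symm

lemma sum_degree_eq_sum_card_neighbors (S : Finset V) :
    ∑ u ∈ S, G.degree u = ∑ x, #{u ∈ S | G.Adj x u} := by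
  simp_rw [← card_neighborFinset_eq_degree, neighborFinset_eq_filter]
  convert sum_card_bipartiteAbove_eq_sum_card_bipartiteBelow (s := S) (t := univ) G.Adj
    using 3 <;> ext <;> simp [adj_comm]

lemma sum_card_neighbors_sq_le
    (hC4 : ∀ ⦃x y u u' : V⦄, u ≠ u' → G.Adj x u → G.Adj x u' → G.Adj y u → G.Adj y u' → x = y)
    (S : Finset V) : ∑ x, #{u ∈ S | G.Adj x u} ^ 2 ≤ #S ^ 2 + ∑ u ∈ S, G.degree u := by
  classical
  have hsq : ∀ T : Finset V, #T ^ 2 = #T.offDiag + #T := fun T => by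
    rw [offDiag_card, sq, Nat.sub_add_cancel (Nat.le_mul_self _)]
  calc _ = ∑ x, #{u ∈ S | G.Adj x u}.offDiag + ∑ x, #{u ∈ S | G.Adj x u} := by
          simp_rw [hsq, sum_add_distrib]
    _ ≤ #S ^ 2 + ∑ u ∈ S, G.degree u := by
          rw [sum_degree_eq_sum_card_neighbors, hsq]
          gcongr
          exact (G.sum_card_offDiag_neighbors_le hC4 S).trans (Nat.le_add_right _ _)

lemma sq_sum_degree_le
    (hC4 : ∀ ⦃x y u u' : V⦄, u ≠ u' → G.Adj x u → G.Adj x u' → G.Adj y u → G.Adj y u' → x = y)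
    (S : Finset V) :
    (∑ u ∈ S, G.degree u) ^ 2 ≤ Fintype.card V * (#S ^ 2 + ∑ u ∈ S, G.degree u) :=
  calc _ = (∑ x, #{u ∈ S | G.Adj x u}) ^ 2 := by rw [sum_degree_eq_sum_card_neighbors]
    _ ≤ Fintype.card V * ∑ x, #{u ∈ S | G.Adj x u} ^ 2 := sq_sum_le_card_mul_sum_sq
    _ ≤ _ := Nat.mul_le_mul_left _ (G.sum_card_neighbors_sq_le hC4 S)

end SimpleGraph

lemma three_mul_le_four_mul_of_sq_le {n c D : ℝ} (hn : 0 ≤ n) (hc : 0 ≤ c)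
    (hcD : 2 * √n * c ≤ D) (hD : D ^ 2 ≤ n * (c ^ 2 + D)) : 3 * D ≤ 4 * n := by
  have hnc : 4 * n * c ^ 2 ≤ D ^ 2 := by
    have := pow_le_pow_left₀ (by positivity) hcD 2
    nlinarith [Real.sq_sqrt hn]
  nlinarith

theorem stmt0_general {V : Type*} [Fintype V] (G : SimpleGraph V)
    [DecidableRel G.Adj] (hg : 5 ≤ G.girth) :
    ∑ v ∈ Finset.univ.filter
        (fun v => 2 * Real.sqrt (Fintype.card V) ≤ (G.degree v : ℝ)),
      (G.degree v : ℝ) ≤ 2 * (Fintype.card V : ℝ) := by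
  set S := Finset.univ.filter (fun v => 2 * Real.sqrt (Fintype.card V) ≤ (G.degree v : ℝ))
  have hcard : 2 * √(Fintype.card V) * #S ≤ ∑ v ∈ S, (G.degree v : ℝ) := by
    simpa [nsmul_eq_mul, mul_comm] using card_nsmul_le_sum S (fun v => (G.degree v : ℝ)) _
      fun v hv => (mem_filter.mp hv).2
  have hsq : (∑ v ∈ S, (G.degree v : ℝ)) ^ 2 ≤
      Fintype.card V * ((#S : ℝ) ^ 2 + ∑ v ∈ S, (G.degree v : ℝ)) := by
    exact_mod_cast G.sq_sum_degree_le (fun _ _ _ _ => G.eq_of_adj_of_adj_of_five_le_girth hg) S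
  have hn : (0 : ℝ) ≤ Fintype.card V := Nat.cast_nonneg _
  linarith [three_mul_le_four_mul_of_sq_le hn (Nat.cast_nonneg _) hcard hsq]

theorem stmt0 {V : Type*} [Fintype V] [DecidableEq V] (G : SimpleGraph V)
    [DecidableRel G.Adj] (hg : 5 ≤ G.girth) :
    ∑ v ∈ Finset.univ.filter
        (fun v => 2 * Real.sqrt (Fintype.card V) ≤ (G.degree v : ℝ)),
      (G.degree v : ℝ) ≤ 2 * (Fintype.card V : ℝ) :=
  stmt0_general G hg
end

section
/- Let G=(V,E) be a simple graph with girth at least 2k+1, where k ≥ 2. Then for all v ∈ V, Σ_{w ∈ N_1(v)} d_{k-1}(w) ≤ d_k(v) + d_1(v)·d_{k-2}(v). -/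
open SimpleGraph Finset

/-!
Girth at least `2k + 1` makes two paths with the same endpoints and total length at most `2k`
equal. Hence, for a neighbour `w` of `v`, a vertex at distance `k - 1` from `w` lies at distance
`k - 2` or `k` from `v`, and a vertex at distance `k` from `v` lies at distance `k - 1` from only
one neighbour of `v`, the second vertex of its shortest path from `v`.
-/

/-- `distCount G v i` is the number of vertices at hop-distance exactly `i` from `v`. -/
noncomputable def distCount {V : Type*} (G : SimpleGraph V) (v : V) (i : ℕ) : ℕ :=
  Set.ncard {w : V | G.Reachable v w ∧ G.dist v w = i}

namespace SimpleGraph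

variable {V : Type*} {G : SimpleGraph V}

theorem Walk.IsPath.eq_of_length_add_lt_egirth {u v : V} {p q : G.Walk u v} (hp : p.IsPath)
    (hq : q.IsPath) (h : ((p.length + q.length : ℕ) : ℕ∞) < G.egirth) : p = q := by
  by_contra hne
  obtain ⟨_, _, p', q', hp', hq', hc⟩ := hp.exists_isCycle_of_ne hq hne
  have hcycle := egirth_le_length hc
  rw [Walk.length_append, Walk.length_reverse] at hcycle
  have : p'.length + q'.length ≤ p.length + q.length :=
    add_le_add (Walk.length_le_of_isSubwalk hp') (Walk.length_le_of_isSubwalk hq')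
  exact absurd h (not_lt.2 (hcycle.trans (by exact_mod_cast this)))

theorem Walk.isPath_cons_of_length_eq_dist {u v w : V} (h : G.Adj u v) {q : G.Walk v w}
    (hq : q.length = G.dist v w) (hle : G.dist v w ≤ G.dist u w) : (q.cons h).IsPath := by
  classical
  refine (q.isPath_of_length_eq_dist hq).cons fun hu => ?_
  have := q.length_dropUntil_lt_length hu h.ne
  have := dist_le (q.dropUntil u hu)
  omega

theorem dist_ne_of_adj {u v w : V} (h : G.Adj u v) (hvw : G.Reachable v w)
    (hg : (2 * G.dist v w + 1 : ℕ) < G.egirth) : G.dist u w ≠ G.dist v w := by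
  intro heq
  obtain ⟨q, hq⟩ := hvw.exists_walk_length_eq_dist
  obtain ⟨p, hp⟩ := (h.reachable.trans hvw).exists_walk_length_eq_dist
  have hpq : p = q.cons h :=
    (p.isPath_of_length_eq_dist hp).eq_of_length_add_lt_egirth
      (Walk.isPath_cons_of_length_eq_dist h hq heq.ge)
      (by rw [hp, heq, Walk.length_cons, hq]; convert hg using 2; ring)
  have := congrArg Walk.length hpq
  rw [Walk.length_cons] at this
  omega

theorem eq_of_adj_of_dist_eq_succ {u v₁ v₂ w : V} {d : ℕ} (h₁ : G.Adj u v₁) (h₂ : G.Adj u v₂)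
    (hd₁ : G.dist v₁ w = d) (hd₂ : G.dist v₂ w = d) (hu : G.dist u w = d + 1)
    (hg : (2 * d + 2 : ℕ) < G.egirth) : v₁ = v₂ := by
  have huw : G.Reachable u w := Reachable.of_dist_ne_zero (by omega)
  obtain ⟨q₁, hq₁⟩ := (h₁.symm.reachable.trans huw).exists_walk_length_eq_dist
  obtain ⟨q₂, hq₂⟩ := (h₂.symm.reachable.trans huw).exists_walk_length_eq_dist
  have hpq : q₁.cons h₁ = q₂.cons h₂ :=
    (Walk.isPath_cons_of_length_eq_dist h₁ hq₁ (by omega)).eq_of_length_add_lt_egirth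
      (Walk.isPath_cons_of_length_eq_dist h₂ hq₂ (by omega))
      (by simp only [Walk.length_cons, hq₁, hq₂, hd₁, hd₂]; convert hg using 2; ring)
  simpa using congrArg Walk.snd hpq

theorem dist_eq_succ_or_eq_pred_of_adj {u v w : V} (h : G.Adj u v) (hvw : G.Reachable v w)
    (hg : (2 * G.dist v w + 1 : ℕ) < G.egirth) :
    G.dist u w = G.dist v w + 1 ∨ G.dist u w = G.dist v w - 1 := by
  have hne := dist_ne_of_adj h hvw hg
  rw [dist_comm (u := u), dist_comm (u := v)] at hne ⊢
  rcases h.symm.diff_dist_adj (u := w) with h' | h' | h' <;> omega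

open scoped Classical in
noncomputable def sphereFinset [Fintype V] (G : SimpleGraph V) (v : V) (i : ℕ) : Finset V :=
  {x | G.Reachable v x ∧ G.dist v x = i}

@[simp]
theorem mem_sphereFinset [Fintype V] {v x : V} {i : ℕ} :
    x ∈ G.sphereFinset v i ↔ G.Reachable v x ∧ G.dist v x = i := by
  simp [sphereFinset]

theorem distCount_eq_card_sphereFinset [Fintype V] (v : V) (i : ℕ) :
    distCount G v i = #(G.sphereFinset v i) := by
  rw [distCount, ← Set.ncard_coe_finset]
  congr 1
  ext
  simp

theorem sum_card_sphereFinset_le [Fintype V] [DecidableEq V] [DecidableRel G.Adj] {d : ℕ}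
    (hg : (2 * d + 2 : ℕ) < G.egirth) (v : V) :
    ∑ w ∈ G.neighborFinset v, #(G.sphereFinset w d) ≤
      #(G.sphereFinset v (d + 1)) + G.degree v * #(G.sphereFinset v (d - 1)) := by
  set A := fun w => G.sphereFinset w d \ G.sphereFinset v (d - 1)
  have hg' : (2 * d + 1 : ℕ) < G.egirth := lt_of_le_of_lt (by gcongr; omega) hg
  have hA : ∀ w ∈ G.neighborFinset v, ∀ x ∈ A w, G.Reachable v x ∧ G.dist v x = d + 1 := by
    intro w hw x hx
    simp only [A, mem_sdiff, mem_sphereFinset, mem_neighborFinset] at hw hx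
    obtain ⟨⟨hwx, hd⟩, hfar⟩ := hx
    have hvx := hw.reachable.trans hwx
    have hnear : G.dist v x ≠ d - 1 := fun h => hfar ⟨hvx, h⟩
    have := dist_eq_succ_or_eq_pred_of_adj hw hwx (hd ▸ hg')
    exact ⟨hvx, by omega⟩
  have hdisj : (G.neighborFinset v : Set V).PairwiseDisjoint A := by
    refine fun w₁ hw₁ w₂ hw₂ hne => Finset.disjoint_left.2 fun x hx₁ hx₂ => hne ?_
    have h₁ := hA w₁ hw₁ x hx₁
    have h₂ := hA w₂ hw₂ x hx₂
    simp only [A, mem_sdiff, mem_sphereFinset, coe_neighborFinset,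
      mem_neighborSet] at hx₁ hx₂ hw₁ hw₂
    exact eq_of_adj_of_dist_eq_succ hw₁ hw₂ hx₁.1.2 hx₂.1.2 h₁.2 hg
  calc ∑ w ∈ G.neighborFinset v, #(G.sphereFinset w d)
      ≤ ∑ w ∈ G.neighborFinset v, (#(A w) + #(G.sphereFinset v (d - 1))) :=
        sum_le_sum fun _ _ => card_le_card_sdiff_add_card
    _ = #((G.neighborFinset v).biUnion A) + G.degree v * #(G.sphereFinset v (d - 1)) := by
        rw [sum_add_distrib, card_biUnion hdisj, sum_const, card_neighborFinset_eq_degree,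
          smul_eq_mul]
    _ ≤ #(G.sphereFinset v (d + 1)) + G.degree v * #(G.sphereFinset v (d - 1)) := by
        gcongr
        intro x hx
        obtain ⟨w, hw, hxw⟩ := mem_biUnion.1 hx
        exact mem_sphereFinset.2 (hA w hw x hxw)

end SimpleGraph

theorem stmt4 {V : Type*} [Fintype V] [DecidableEq V] (G : SimpleGraph V)
    [DecidableRel G.Adj] (k : ℕ) (hk : 2 ≤ k) (hg : (2 * k + 1 : ℕ∞) ≤ G.girth)
    (v : V) :
    ∑ w ∈ G.neighborFinset v, distCount G w (k - 1) ≤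
      distCount G v k + G.degree v * distCount G v (k - 2) := by
  obtain ⟨d, rfl⟩ : ∃ d, k = d + 1 := ⟨k - 1, by omega⟩
  have hegirth : (2 * d + 2 : ℕ) < G.egirth :=
    calc ((2 * d + 2 : ℕ) : ℕ∞) < (2 * (d + 1) + 1 : ℕ) := by exact_mod_cast (by omega)
      _ ≤ G.girth := by exact_mod_cast hg
      _ ≤ G.egirth := G.egirth.natCast_toNat_le_self
  rw [show d + 1 - 2 = d - 1 by omega]
  simpa only [distCount_eq_card_sphereFinset, Nat.add_sub_cancel] using
    sum_card_sphereFinset_le hegirth v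
end

section
/- Let k ≥ 2 and let G=(V,E) be an n-vertex simple graph with girth at least 2k+1 and minimum degree at least 4. Then Σ_{v ∈ V} d_1(v)²·d_{k-2}(v) / (d_k(v) + d_1(v)·d_{k-2}(v)) ≤ 2n. -/
open SimpleGraph Finset

/-!
Write `S_i(v)` for the set of vertices at distance `i` from `v`. As the girth exceeds `2k`,
geodesics of length at most `k` are unique and two adjacent vertices are never at the same
distance `< k` from a third one. So for an edge `uv` the sphere `S_{k-1}(u)` is covered by the
vertices of `S_k(v)` and of `S_{k-2}(v)` at distance `k - 1` from `u`; let `m(u,v)` count the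
latter. Fixing `v` and letting `u` run over its neighbours, every vertex of `S_k(v)` is counted
at most once and every vertex of `S_{k-2}(v)` at least `d(v) - 1` times, and Cauchy–Schwarz
together with `d(v)² ≤ 2 (d(v) - 1)²` (this is where `d(v) ≥ 4` enters) bounds the `v`-th summand
by `2 ∑_u m(u,v) / |S_{k-1}(u)|`. Fixing `u` instead, the vertices counted by the `m(u,v)` are
distinct points of `S_{k-1}(u)`, so the double sum is at most `2n`.
-/

theorem sq_card_mul_div_le_two_mul_sum_div {ι : Type*} (s : Finset ι) (m D A : ι → ℝ) (a b : ℝ)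
    (hs : 4 ≤ #s) (hb : 0 ≤ b) (hm : ∀ i ∈ s, 0 ≤ m i) (hmb : ∀ i ∈ s, m i ≤ b)
    (hmD : ∀ i ∈ s, m i ≤ D i) (hDA : ∀ i ∈ s, D i ≤ A i + m i) (hAa : ∑ i ∈ s, A i ≤ a)
    (hsum : (#s - 1) * b ≤ ∑ i ∈ s, m i) :
    (#s : ℝ) ^ 2 * b / (a + #s * b) ≤ 2 * ∑ i ∈ s, m i / D i := by
  set d : ℝ := (#s : ℝ)
  set S := ∑ i ∈ s, m i
  set T := ∑ i ∈ s, m i / D i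
  have hd : (4 : ℝ) ≤ d := by simp only [d]; exact_mod_cast hs
  have hT : 0 ≤ T := sum_nonneg fun i hi => div_nonneg (hm i hi) ((hm i hi).trans (hmD i hi))
  have hSb : S ≤ d * b := by
    simpa [S, d] using sum_le_card_nsmul s m b hmb
  have ha : 0 ≤ a := calc
    0 ≤ ∑ i ∈ s, (D i - m i) := sum_nonneg fun i hi => sub_nonneg.mpr (hmD i hi)
    _ ≤ ∑ i ∈ s, A i := sum_le_sum fun i hi => by linarith [hDA i hi]
    _ ≤ a := hAa
  have hCS : S ^ 2 ≤ T * ∑ i ∈ s, m i * D i := by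
    refine sum_sq_le_sum_mul_sum_of_sq_le_mul s
      (fun i hi => div_nonneg (hm i hi) ((hm i hi).trans (hmD i hi)))
      (fun i hi => mul_nonneg (hm i hi) ((hm i hi).trans (hmD i hi))) fun i hi => ?_
    rcases (hm i hi).eq_or_lt with h0 | hpos
    · simp [← h0]
    · have : D i ≠ 0 := (hpos.trans_le (hmD i hi)).ne'
      exact (by field_simp : m i / D i * (m i * D i) = m i ^ 2).ge
  have hmDsum : ∑ i ∈ s, m i * D i ≤ b * (a + S) := by
    calc ∑ i ∈ s, m i * D i ≤ ∑ i ∈ s, b * (A i + m i) :=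
          sum_le_sum fun i hi => mul_le_mul (hmb i hi) (hDA i hi)
            ((hm i hi).trans (hmD i hi)) hb
      _ ≤ b * (a + S) := by
          rw [← mul_sum, sum_add_distrib]
          exact mul_le_mul_of_nonneg_left (by linarith) hb
  rcases hb.eq_or_lt with rfl | hb
  · simp [hT]
  rw [div_le_iff₀ (by positivity)]
  have key : (d - 1) ^ 2 * b ≤ T * (a + d * b) := by
    have : ((d - 1) * b) ^ 2 ≤ b * (T * (a + d * b)) := calc
      ((d - 1) * b) ^ 2 ≤ S ^ 2 := pow_le_pow_left₀ (by nlinarith) hsum 2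
      _ ≤ T * (b * (a + S)) := hCS.trans (mul_le_mul_of_nonneg_left hmDsum hT)
      _ ≤ b * (T * (a + d * b)) := by nlinarith [mul_nonneg hT hb.le]
    nlinarith
  have hd2 : d ^ 2 ≤ 2 * (d - 1) ^ 2 := by nlinarith
  nlinarith

namespace Finset

variable {α β : Type*} {s : Finset α} {t : Finset β} {r : α → β → Prop} [∀ a b, Decidable (r a b)]

theorem sum_card_filter_le_card (h : ∀ b ∈ t, #{a ∈ s | r a b} ≤ 1) :
    ∑ a ∈ s, #{b ∈ t | r a b} ≤ #t := by
  refine (sum_card_bipartiteAbove_eq_sum_card_bipartiteBelow r).trans_le ?_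
  simpa [bipartiteBelow] using sum_le_card_nsmul t _ 1 h

theorem mul_card_le_sum_card_filter {n : ℕ} (h : ∀ b ∈ t, n ≤ #{a ∈ s | r a b}) :
    n * #t ≤ ∑ a ∈ s, #{b ∈ t | r a b} := by
  refine le_of_le_of_eq ?_ (sum_card_bipartiteAbove_eq_sum_card_bipartiteBelow r).symm
  rw [mul_comm]
  simpa [bipartiteBelow] using card_nsmul_le_sum t _ n h

end Finset

namespace SimpleGraph

variable {V : Type*} {G : SimpleGraph V} {s s' t u v x : V}

theorem Walk.IsPath.egirth_le_length_add_length {p q : G.Walk u v} (hp : p.IsPath)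
    (hq : q.IsPath) (hpq : p ≠ q) : G.egirth ≤ (p.length + q.length : ℕ) := by
  obtain ⟨w, -, -, c, hc, hlen⟩ := hp.exists_isCycle_length_le_add_of_ne hq hpq
  exact (egirth_le_length hc).trans (by exact_mod_cast hlen)

theorem Walk.eq_of_length_eq_dist {p q : G.Walk u v} (hp : p.length = G.dist u v)
    (hq : q.length = G.dist u v) (hg : ((2 * G.dist u v : ℕ) : ℕ∞) < G.egirth) : p = q := by
  by_contra hpq
  have := (p.isPath_of_length_eq_dist hp).egirth_le_length_add_length
    (q.isPath_of_length_eq_dist hq) hpq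
  rw [hp, hq, ← two_mul] at this
  exact this.not_gt hg

theorem Adj.dist_ne_dist (h : G.Adj s t) (hr : G.Reachable s x)
    (hg : ((2 * G.dist s x + 1 : ℕ) : ℕ∞) < G.egirth) : G.dist s x ≠ G.dist t x := by
  classical
  intro heq
  obtain ⟨P, hP, hPl⟩ := (h.symm.reachable.trans hr).exists_path_of_dist
  obtain ⟨Q, hQ, hQl⟩ := hr.exists_path_of_dist
  have hsP : s ∉ P.support := fun hs => by
    have := (dist_le (P.dropUntil s hs)).trans_lt (Walk.length_dropUntil_lt_length hs h.ne)
    omega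
  have hne : Q ≠ Walk.cons h P := fun hQP => by
    have := congrArg Walk.length hQP
    simp only [Walk.length_cons] at this
    omega
  have hlen : Q.length + (Walk.cons h P).length = 2 * G.dist s x + 1 := by
    rw [Walk.length_cons]; omega
  exact (hlen ▸ hQ.egirth_le_length_add_length (hP.cons hsP) hne).not_gt hg

theorem Adj.dist_eq_add_one_or_add_one_eq (h : G.Adj s t) (hr : G.Reachable s x)
    (hg : ((2 * G.dist s x + 1 : ℕ) : ℕ∞) < G.egirth) :
    G.dist t x = G.dist s x + 1 ∨ G.dist t x + 1 = G.dist s x := by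
  have hne := h.dist_ne_dist hr hg
  rw [dist_comm (u := s), dist_comm (u := t)] at hne ⊢
  rcases h.diff_dist_adj (u := x) with h' | h' | h' <;> omega

theorem eq_of_adj_of_dist_add_one_eq (hs : G.Adj t s) (hs' : G.Adj t s')
    (hds : G.dist s x + 1 = G.dist t x) (hds' : G.dist s' x + 1 = G.dist t x)
    (hg : ((2 * G.dist t x : ℕ) : ℕ∞) < G.egirth) : s = s' := by
  have ht : G.Reachable t x := Reachable.of_dist_ne_zero (by omega)
  obtain ⟨P, -, hP⟩ := (hs.symm.reachable.trans ht).exists_path_of_dist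
  obtain ⟨Q, -, hQ⟩ := (hs'.symm.reachable.trans ht).exists_path_of_dist
  have := Walk.eq_of_length_eq_dist (p := .cons hs P) (q := .cons hs' Q)
    (by rw [Walk.length_cons, hP, hds]) (by rw [Walk.length_cons, hQ, hds']) hg
  simpa using congrArg Walk.snd this

section Fintype

variable [Fintype V]

open Classical in
noncomputable def distSphere (G : SimpleGraph V) (v : V) (i : ℕ) : Finset V :=
  {w | G.Reachable v w ∧ G.dist v w = i}

@[simp]
theorem mem_distSphere {i : ℕ} : x ∈ G.distSphere v i ↔ G.Reachable v x ∧ G.dist v x = i := by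
  classical
  simp [distSphere]

theorem _root_.distCount_eq_card_distSphere (i : ℕ) : distCount G v i = #(G.distSphere v i) := by
  rw [distCount, ← Set.ncard_coe_finset]
  congr
  ext
  simp

theorem filter_distSphere_dist_eq_comm (h : G.Adj u v) (i j : ℕ) :
    {x ∈ G.distSphere v i | G.dist u x = j} = {x ∈ G.distSphere u j | G.dist v x = i} := by
  ext x
  simp only [mem_filter, mem_distSphere]
  constructor
  · rintro ⟨⟨hr, hi⟩, hj⟩
    exact ⟨⟨h.reachable.trans hr, hj⟩, hi⟩
  · rintro ⟨⟨hr, hj⟩, hi⟩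
    exact ⟨⟨h.symm.reachable.trans hr, hi⟩, hj⟩

theorem card_distSphere_succ_le_of_adj {i : ℕ} (h : G.Adj v u)
    (hg : ((2 * i + 3 : ℕ) : ℕ∞) < G.egirth) :
    #(G.distSphere u (i + 1)) ≤ #{x ∈ G.distSphere v (i + 2) | G.dist u x = i + 1} +
      #{x ∈ G.distSphere v i | G.dist u x = i + 1} := by
  classical
  rw [filter_distSphere_dist_eq_comm h.symm, filter_distSphere_dist_eq_comm h.symm]
  refine (card_le_card fun x hx => ?_).trans (card_union_le _ _)
  rw [mem_distSphere] at hx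
  have := h.symm.dist_eq_add_one_or_add_one_eq hx.1 (by rwa [hx.2])
  simp only [mem_union, mem_filter, mem_distSphere]
  exact this.imp (fun _ => ⟨hx, by omega⟩) (fun _ => ⟨hx, by omega⟩)

variable [DecidableRel G.Adj]

theorem card_filter_dist_add_one_eq_le_one (hg : ((2 * G.dist t x : ℕ) : ℕ∞) < G.egirth) :
    #{s ∈ G.neighborFinset t | G.dist s x + 1 = G.dist t x} ≤ 1 := by
  refine card_le_one.mpr fun s hs s' hs' => ?_
  simp only [mem_filter, mem_neighborFinset] at hs hs'
  exact eq_of_adj_of_dist_add_one_eq hs.1 hs'.1 hs.2 hs'.2 hg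

theorem degree_sub_one_le_card_filter_dist_eq_add_one (hr : G.Reachable t x)
    (hg : ((2 * G.dist t x + 1 : ℕ) : ℕ∞) < G.egirth) :
    G.degree t - 1 ≤ #{s ∈ G.neighborFinset t | G.dist s x = G.dist t x + 1} := by
  have hcloser : #{s ∈ G.neighborFinset t | ¬G.dist s x = G.dist t x + 1} ≤ 1 := by
    refine (card_le_card fun s hs => ?_).trans
      (card_filter_dist_add_one_eq_le_one (t := t) (x := x) (hg.trans' (by norm_cast; omega)))
    simp only [mem_filter, mem_neighborFinset] at hs ⊢
    exact ⟨hs.1, (hs.1.dist_eq_add_one_or_add_one_eq hr hg).resolve_left hs.2⟩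
  have := (G.neighborFinset t).card_filter_add_card_filter_not
    (fun s => G.dist s x = G.dist t x + 1)
  rw [card_neighborFinset_eq_degree] at this
  omega

theorem sum_sum_neighborFinset_comm {M : Type*} [AddCommMonoid M] (f : V → V → M) :
    ∑ v, ∑ u ∈ G.neighborFinset v, f u v = ∑ u, ∑ v ∈ G.neighborFinset u, f u v :=
  sum_comm' fun v u => by simp [adj_comm]

theorem sum_card_filter_distSphere_le_card {i : ℕ} (hg : ((2 * i + 4 : ℕ) : ℕ∞) < G.egirth) :
    ∑ u ∈ G.neighborFinset v, #{x ∈ G.distSphere v (i + 2) | G.dist u x = i + 1} ≤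
      #(G.distSphere v (i + 2)) := by
  refine sum_card_filter_le_card fun x hx => ?_
  rw [mem_distSphere] at hx
  rw [filter_congr fun u _ => show G.dist u x = i + 1 ↔ G.dist u x + 1 = G.dist v x by omega]
  exact card_filter_dist_add_one_eq_le_one (by rwa [hx.2])

theorem degree_sub_one_mul_card_distSphere_le {i : ℕ} (hg : ((2 * i + 1 : ℕ) : ℕ∞) < G.egirth) :
    (G.degree v - 1) * #(G.distSphere v i) ≤
      ∑ u ∈ G.neighborFinset v, #{x ∈ G.distSphere v i | G.dist u x = i + 1} := by
  refine mul_card_le_sum_card_filter fun x hx => ?_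
  rw [mem_distSphere] at hx
  have := degree_sub_one_le_card_filter_dist_eq_add_one hx.1 (by rwa [hx.2])
  rwa [hx.2] at this

theorem sum_card_filter_distSphere_le_card_distSphere_succ {i : ℕ}
    (hg : ((2 * i + 2 : ℕ) : ℕ∞) < G.egirth) :
    ∑ v ∈ G.neighborFinset u, #{x ∈ G.distSphere v i | G.dist u x = i + 1} ≤
      #(G.distSphere u (i + 1)) := by
  rw [sum_congr rfl fun v hv =>
    congrArg card (filter_distSphere_dist_eq_comm ((mem_neighborFinset _ _ _).mp hv) _ _)]
  refine sum_card_filter_le_card fun x hx => ?_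
  rw [mem_distSphere] at hx
  rw [filter_congr fun v _ => show G.dist v x = i ↔ G.dist v x + 1 = G.dist u x by omega]
  exact card_filter_dist_add_one_eq_le_one (by rwa [hx.2])

theorem sq_degree_mul_div_le_two_mul_sum {i : ℕ} (hg : ((2 * i + 4 : ℕ) : ℕ∞) < G.egirth)
    (hv : 4 ≤ G.degree v) :
    (G.degree v : ℝ) ^ 2 * #(G.distSphere v i) /
        (#(G.distSphere v (i + 2)) + G.degree v * #(G.distSphere v i)) ≤
      2 * ∑ u ∈ G.neighborFinset v,
        (#{x ∈ G.distSphere v i | G.dist u x = i + 1} : ℝ) / #(G.distSphere u (i + 1)) := by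
  rw [← card_neighborFinset_eq_degree] at hv ⊢
  refine sq_card_mul_div_le_two_mul_sum_div _ _ _
    (fun u => #{x ∈ G.distSphere v (i + 2) | G.dist u x = i + 1}) _ _ hv (Nat.cast_nonneg _)
    (fun _ _ => Nat.cast_nonneg _) (fun u _ => ?_) (fun u hu => ?_) (fun u hu => ?_) ?_ ?_
  · exact_mod_cast card_le_card (filter_subset _ _)
  · have hvu : v ∈ G.neighborFinset u := by simpa [adj_comm] using hu
    exact_mod_cast (single_le_sum (fun _ _ => Nat.zero_le _) hvu).trans
      (sum_card_filter_distSphere_le_card_distSphere_succ (hg.trans' (by norm_cast; omega)))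
  · rw [mem_neighborFinset] at hu
    exact_mod_cast card_distSphere_succ_le_of_adj hu (hg.trans' (by norm_cast; omega))
  · exact_mod_cast sum_card_filter_distSphere_le_card hg
  · have := degree_sub_one_mul_card_distSphere_le (v := v) (i := i)
      (hg.trans' (by norm_cast; omega))
    rw [← card_neighborFinset_eq_degree] at this
    rw [← Nat.cast_one, ← Nat.cast_sub (by omega)]
    exact_mod_cast this

theorem sum_div_card_distSphere_le_one {i : ℕ} (hg : ((2 * i + 2 : ℕ) : ℕ∞) < G.egirth) :
    ∑ v ∈ G.neighborFinset u,
      (#{x ∈ G.distSphere v i | G.dist u x = i + 1} : ℝ) / #(G.distSphere u (i + 1)) ≤ 1 := by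
  rw [← sum_div]
  exact div_le_one_of_le₀ (mod_cast sum_card_filter_distSphere_le_card_distSphere_succ hg)
    (Nat.cast_nonneg _)

end Fintype

end SimpleGraph

theorem stmt7_general {V : Type*} [Fintype V] (G : SimpleGraph V)
    [DecidableRel G.Adj] (k : ℕ) (hk : 2 ≤ k) (hg : (2 * k + 1 : ℕ∞) ≤ G.girth)
    (hmin : ∀ v : V, 4 ≤ G.degree v) :
    ∑ v : V, (G.degree v : ℝ) ^ 2 * (distCount G v (k - 2) : ℝ) /
        ((distCount G v k : ℝ) + (G.degree v : ℝ) * (distCount G v (k - 2) : ℝ)) ≤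
      2 * (Fintype.card V : ℝ) := by
  obtain ⟨i, rfl⟩ := Nat.exists_eq_add_of_le' hk
  have hg' : ((2 * i + 4 : ℕ) : ℕ∞) < G.egirth := calc
    ((2 * i + 4 : ℕ) : ℕ∞) < 2 * (i + 2 : ℕ) + 1 := by norm_cast; omega
    _ ≤ G.girth := hg
    _ ≤ G.egirth := ENat.natCast_toNat_le_self _
  simp only [distCount_eq_card_distSphere, Nat.add_sub_cancel]
  calc _ ≤ ∑ v, 2 * ∑ u ∈ G.neighborFinset v,
          (#{x ∈ G.distSphere v i | G.dist u x = i + 1} : ℝ) / #(G.distSphere u (i + 1)) :=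
        sum_le_sum fun v _ => sq_degree_mul_div_le_two_mul_sum hg' (hmin v)
    _ = 2 * ∑ u, ∑ v ∈ G.neighborFinset u,
          (#{x ∈ G.distSphere v i | G.dist u x = i + 1} : ℝ) / #(G.distSphere u (i + 1)) := by
        rw [← mul_sum, sum_sum_neighborFinset_comm]
    _ ≤ 2 * ∑ _u : V, (1 : ℝ) := by
        gcongr with u
        exact sum_div_card_distSphere_le_one (hg'.trans' (by norm_cast; omega))
    _ = 2 * Fintype.card V := by simp

theorem stmt7 {V : Type*} [Fintype V] [DecidableEq V] (G : SimpleGraph V)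
    [DecidableRel G.Adj] (k : ℕ) (hk : 2 ≤ k) (hg : (2 * k + 1 : ℕ∞) ≤ G.girth)
    (hmin : ∀ v : V, 4 ≤ G.degree v) :
    ∑ v : V, (G.degree v : ℝ) ^ 2 * (distCount G v (k - 2) : ℝ) /
        ((distCount G v k : ℝ) + (G.degree v : ℝ) * (distCount G v (k - 2) : ℝ)) ≤
      2 * (Fintype.card V : ℝ) :=
  stmt7_general G k hk hg hmin
end

section
/- Let k ≥ 3 and let G=(V,E) be a simple graph on n vertices with girth at least 2k+1. Define V_low = {v : d_1(v) ≤ n^(1/k)}, V_med = {v : n^((k-2)/(k-1))·d_1(v)^(1/(k-1)) ≤ d_{k-1}(v)}, and for 0 ≤ j ≤ ⌊(k-3)/2⌋, V_{high,j} = {v : d_{k-2j-1}(v) ≤ n^(1/(k-1))·d_{k-2j-3}(v)·d_1(v)^((k-2)/(k-1))}. Then V = V_low ∪ V_med ∪ (∪_j V_{high,j}). -/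
/-!
Put `c = n^{1/(k-1)} d^{(k-2)/(k-1)}` with `d = d_1(v)`, and write `k = 2m + 3 + b` with
`b ∈ {0, 1}`. If `v` lies in no `V_{high,j}`, then `c · d_i(v) < d_{i+2}(v)` for
`i = b, b + 2, …, k - 3`, and telescoping gives `c^{m+1} d^b ≤ d_{k-1}(v)`. If moreover `v` is
not low, then `n ≤ d^k`, and trading the surplus power of `n` in `n^{(k-2)/(k-1)} d^{1/(k-1)}`
against `d^k` turns it into exactly `c^{m+1} d^b`, so `v ∈ V_med`.
-/

open SimpleGraph Finset

lemma distCount_zero {V : Type*} (G : SimpleGraph V) (v : V) : distCount G v 0 = 1 := by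
  have : {w : V | G.Reachable v w ∧ G.dist v w = 0} = {v} := by
    ext w
    simp only [Set.mem_ofPred_eq, Set.mem_singleton_iff]
    exact ⟨fun ⟨hr, hd⟩ => (hr.dist_eq_zero_iff.mp hd).symm,
      by rintro rfl; exact ⟨Reachable.refl _, dist_self⟩⟩
  rw [distCount, this, Set.ncard_singleton]

lemma distCount_one {V : Type*} [Fintype V] (G : SimpleGraph V) [DecidableRel G.Adj] (v : V) :
    distCount G v 1 = G.degree v := by
  have : {w : V | G.Reachable v w ∧ G.dist v w = 1} = G.neighborSet v := by
    ext w
    simp only [Set.mem_ofPred_eq, mem_neighborSet]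
    exact ⟨fun ⟨_, hd⟩ => dist_eq_one_iff_adj.mp hd,
      fun h => ⟨h.reachable, dist_eq_one_iff_adj.mpr h⟩⟩
  rw [distCount, this, Set.ncard_eq_toFinset_card']
  rfl

lemma distCount_eq_degree_pow {V : Type*} [Fintype V] (G : SimpleGraph V) [DecidableRel G.Adj]
    (v : V) {b : ℕ} (hb : b ≤ 1) : distCount G v b = G.degree v ^ b := by
  interval_cases b
  · rw [distCount_zero, pow_zero]
  · rw [distCount_one, pow_one]

lemma pow_mul_le_of_forall_mul_le {R : Type*} [Semiring R] [PartialOrder R] [IsOrderedRing R]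
    {c : R} (hc : 0 ≤ c) {f : ℕ → R} {m : ℕ} (h : ∀ i < m, c * f i ≤ f (i + 1)) :
    c ^ m * f 0 ≤ f m := by
  induction m with
  | zero => simp
  | succ m ih =>
    calc c ^ (m + 1) * f 0 = c * (c ^ m * f 0) := by rw [pow_succ', mul_assoc]
      _ ≤ c * f m := by gcongr; exact ih fun i hi => h i (by omega)
      _ ≤ f (m + 1) := h m (by omega)

lemma pow_mul_le_pow_mul_pow {R : Type*} [CommSemiring R] [PartialOrder R] [IsOrderedRing R]
    {x y : R} (hx : 0 ≤ x) (hy : 0 ≤ y) (m b : ℕ) (hxy : x ≤ y ^ (2 * m + 3 + b)) :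
    x ^ (2 * m + 1 + b) * y ≤ (x * y ^ (2 * m + 1 + b)) ^ (m + 1) * y ^ (b * (2 * m + 2 + b)) :=
  calc x ^ (2 * m + 1 + b) * y = x ^ (m + 1) * x ^ (m + b) * y := by ring
    _ ≤ x ^ (m + 1) * (y ^ (2 * m + 3 + b)) ^ (m + b) * y := by gcongr
    _ = _ := by ring

lemma rpow_div_natCast_pow {x : ℝ} (hx : 0 ≤ x) (a : ℝ) {p : ℕ} (hp : p ≠ 0) :
    (x ^ (a / p)) ^ p = x ^ a := by
  rw [← Real.rpow_mul_natCast hx, div_mul_cancel₀ _ (Nat.cast_ne_zero.mpr hp)]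

lemma le_pow_of_rpow_one_div_le {x y : ℝ} (hx : 0 ≤ x) {k : ℕ} (hk : k ≠ 0)
    (h : x ^ ((1 : ℝ) / k) ≤ y) : x ≤ y ^ k :=
  calc x = (x ^ ((1 : ℝ) / k)) ^ k := by rw [one_div, Real.rpow_inv_natCast_pow hx hk]
    _ ≤ y ^ k := by gcongr

/-- Raising both sides to the power `k - 1` clears the fractional exponents and reduces the
claim to `pow_mul_le_pow_mul_pow`. -/
lemma rpow_mul_rpow_le_pow_mul_pow {n d : ℝ} (hn : 0 ≤ n) (hd : 0 ≤ d) {k m b : ℕ}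
    (hk : k = 2 * m + 3 + b) (hnd : n ≤ d ^ k) :
    n ^ (((k : ℝ) - 2) / ((k : ℝ) - 1)) * d ^ ((1 : ℝ) / ((k : ℝ) - 1)) ≤
      (n ^ ((1 : ℝ) / ((k : ℝ) - 1)) * d ^ (((k : ℝ) - 2) / ((k : ℝ) - 1))) ^ (m + 1) * d ^ b := by
  have hk1 : (k : ℝ) - 1 = ((2 * m + 2 + b : ℕ) : ℝ) := by rw [hk]; push_cast; ring
  have hk2 : (k : ℝ) - 2 = ((2 * m + 1 + b : ℕ) : ℝ) := by rw [hk]; push_cast; ring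
  have hp : 2 * m + 2 + b ≠ 0 := by omega
  rw [hk1, hk2]
  refine le_of_pow_le_pow_left₀ hp (by positivity) ?_
  rw [mul_pow, mul_pow, ← pow_mul, mul_comm (m + 1), pow_mul, mul_pow, ← pow_mul d b]
  simp only [rpow_div_natCast_pow hn _ hp, rpow_div_natCast_pow hd _ hp, Real.rpow_natCast,
    Real.rpow_one]
  exact pow_mul_le_pow_mul_pow hn hd m b (hk ▸ hnd)

theorem stmt8_general {V : Type*} [Fintype V] (G : SimpleGraph V)
    [DecidableRel G.Adj] (k : ℕ) (hk : 3 ≤ k)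
    (v : V) :
    ((G.degree v : ℝ) ≤ (Fintype.card V : ℝ) ^ ((1 : ℝ) / k)) ∨
    ((Fintype.card V : ℝ) ^ (((k : ℝ) - 2) / ((k : ℝ) - 1)) *
        (G.degree v : ℝ) ^ ((1 : ℝ) / ((k : ℝ) - 1)) ≤ (distCount G v (k - 1) : ℝ)) ∨
    (∃ j : ℕ, j ≤ (k - 3) / 2 ∧
      (distCount G v (k - 2 * j - 1) : ℝ) ≤
        (Fintype.card V : ℝ) ^ ((1 : ℝ) / ((k : ℝ) - 1)) *
          (distCount G v (k - 2 * j - 3) : ℝ) *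
          (G.degree v : ℝ) ^ (((k : ℝ) - 2) / ((k : ℝ) - 1))) := by
  set n : ℝ := (Fintype.card V : ℝ)
  set d : ℝ := (G.degree v : ℝ)
  set c := n ^ ((1 : ℝ) / ((k : ℝ) - 1)) * d ^ (((k : ℝ) - 2) / ((k : ℝ) - 1))
  rcases le_or_gt d (n ^ ((1 : ℝ) / k)) with hlow | hdeg
  · exact Or.inl hlow
  refine Or.inr (or_iff_not_imp_right.mpr fun hhigh => ?_)
  push Not at hhigh
  obtain ⟨m, b, hkmb, hb⟩ : ∃ m b, k = 2 * m + 3 + b ∧ b ≤ 1 :=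
    ⟨(k - 3) / 2, k - 3 - 2 * ((k - 3) / 2), by omega, by omega⟩
  have hnd : n ≤ d ^ k := le_pow_of_rpow_one_div_le (by positivity) (by omega) hdeg.le
  have hsteps : ∀ i < m + 1, c * distCount G v (b + 2 * i) ≤ distCount G v (b + 2 * (i + 1)) := by
    intro i hi
    have h := hhigh (m - i) (by omega)
    rw [show k - 2 * (m - i) - 3 = b + 2 * i by omega,
      show k - 2 * (m - i) - 1 = b + 2 * (i + 1) by omega] at h
    linarith [mul_right_comm (n ^ ((1 : ℝ) / ((k : ℝ) - 1))) (distCount G v (b + 2 * i) : ℝ)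
      (d ^ (((k : ℝ) - 2) / ((k : ℝ) - 1)))]
  calc n ^ (((k : ℝ) - 2) / ((k : ℝ) - 1)) * d ^ ((1 : ℝ) / ((k : ℝ) - 1))
      ≤ c ^ (m + 1) * d ^ b := rpow_mul_rpow_le_pow_mul_pow (by positivity) (by positivity) hkmb hnd
    _ = c ^ (m + 1) * distCount G v b := by rw [distCount_eq_degree_pow G v hb, Nat.cast_pow]
    _ ≤ distCount G v (b + 2 * (m + 1)) :=
      pow_mul_le_of_forall_mul_le (f := fun i => (distCount G v (b + 2 * i) : ℝ))
        (by positivity) hsteps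
    _ = distCount G v (k - 1) := by rw [show b + 2 * (m + 1) = k - 1 by omega]

theorem stmt8 {V : Type*} [Fintype V] [DecidableEq V] (G : SimpleGraph V)
    [DecidableRel G.Adj] (k : ℕ) (hk : 3 ≤ k) (hg : (2 * k + 1 : ℕ∞) ≤ G.girth)
    (v : V) :
    ((G.degree v : ℝ) ≤ (Fintype.card V : ℝ) ^ ((1 : ℝ) / k)) ∨
    ((Fintype.card V : ℝ) ^ (((k : ℝ) - 2) / ((k : ℝ) - 1)) *
        (G.degree v : ℝ) ^ ((1 : ℝ) / ((k : ℝ) - 1)) ≤ (distCount G v (k - 1) : ℝ)) ∨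
    (∃ j : ℕ, j ≤ (k - 3) / 2 ∧
      (distCount G v (k - 2 * j - 1) : ℝ) ≤
        (Fintype.card V : ℝ) ^ ((1 : ℝ) / ((k : ℝ) - 1)) *
          (distCount G v (k - 2 * j - 3) : ℝ) *
          (G.degree v : ℝ) ^ (((k : ℝ) - 2) / ((k : ℝ) - 1))) :=
  stmt8_general G k hk v
end
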